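/- arXiv:1805.11388 — 2 statements merged into one kernel-verified Lean document; each statement's English description precedes it below -/
import Mathlib

section
/- Let μ, ν be finite nonnegative Borel measures on ℝ² invariant under rotation A of angle 2π/m (m ≥ 2), with ν purely atomic with finitely many atoms, ν(ℝ²) = 1, and suppose G√(ν(E)) ≤ μ(E) for all Borel E with some constant G > 0. Assume moreover that no atom of ν is fixed by A (so atoms come in orbits of size m). Then μ(ℝ²) ≥ √m · G. -/
open Matrix MeasureTheory

/-- The rotation of `ℝ²` by angle `2π/m`. -/
noncomputable def rotM (m : ℕ) : Matrix (Fin 2) (Fin 2) ℝ :=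
  !![Real.cos (2 * Real.pi / m), -Real.sin (2 * Real.pi / m);
     Real.sin (2 * Real.pi / m), Real.cos (2 * Real.pi / m)]

/-- The rotation of `ℝ²` by angle `θ`. -/
noncomputable def rotA (θ : ℝ) : Matrix (Fin 2) (Fin 2) ℝ :=
  !![Real.cos θ, -Real.sin θ; Real.sin θ, Real.cos θ]

lemma rotA_mul (a b : ℝ) : rotA a * rotA b = rotA (a + b) := by
  simp only [rotA, Matrix.mul_fin_two, Real.cos_add, Real.sin_add]
  congr 1 <;> ring

lemma rotA_zero : rotA 0 = 1 := by
  simp [rotA, Matrix.one_fin_two]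

lemma rotA_inj (θ : ℝ) : Function.Injective ((rotA θ).mulVec) := by
  intro u v h
  have : (rotA (-θ)).mulVec ((rotA θ).mulVec u) = (rotA (-θ)).mulVec ((rotA θ).mulVec v) := by
    rw [h]
  simpa only [Matrix.mulVec_mulVec, rotA_mul, neg_add_cancel, rotA_zero, Matrix.one_mulVec] using this

lemma rotA_iterate (θ : ℝ) (k : ℕ) (p : Fin 2 → ℝ) :
    ((rotA θ).mulVec)^[k] p = (rotA (k * θ)).mulVec p := by
  induction k with
  | zero => simp [rotA_zero]
  | succ n ih =>
      rw [Function.iterate_succ_apply', ih, Matrix.mulVec_mulVec, rotA_mul]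
      push_cast
      ring_nf

lemma rotA_meas (θ : ℝ) : Measurable ((rotA θ).mulVec) := by
  have := (LinearMap.continuous_of_finiteDimensional ((rotA θ).mulVecLin)).measurable
  exact this

lemma rotA_fixed {θ : ℝ} {p : Fin 2 → ℝ} (h : (rotA θ).mulVec p = p) (hp : p ≠ 0) :
    Real.cos θ = 1 := by
  have h0 := congrFun h 0
  have h1 := congrFun h 1
  simp [rotA, Matrix.mulVec, dotProduct, Fin.sum_univ_two, Matrix.vecHead, Matrix.vecTail] at h0 h1
  set c := Real.cos θ with hc
  set s := Real.sin θ with hs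
  have e0 : ((c-1)^2 + s^2) * p 0 = 0 := by linear_combination (c-1)*h0 + s*h1
  have e1 : ((c-1)^2 + s^2) * p 1 = 0 := by linear_combination (-s)*h0 + (c-1)*h1
  have hne : ¬ (p 0 = 0 ∧ p 1 = 0) := by
    intro ⟨a, b⟩
    apply hp
    funext i
    fin_cases i <;> simpa
  have hz : (c-1)^2 + s^2 = 0 := by
    rcases mul_eq_zero.1 e0 with h | h
    · exact h
    rcases mul_eq_zero.1 e1 with h' | h'
    · exact h'
    exact absurd ⟨h, h'⟩ hne
  nlinarith [sq_nonneg (c-1), sq_nonneg s]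

theorem concentration_lower_bound {ι : Type*} (m : ℕ) (hm : 2 ≤ m)
    (μ ν : Measure (Fin 2 → ℝ)) [IsFiniteMeasure μ] [IsFiniteMeasure ν]
    (hμinv : Measure.map ((rotM m).mulVec) μ = μ)
    (hνinv : Measure.map ((rotM m).mulVec) ν = ν)
    (J : Finset ι) (x : ι → (Fin 2 → ℝ)) (hx : Set.InjOn x J) (w : ι → ℝ)
    (hw : ∀ j ∈ J, 0 ≤ w j)
    (hν : ν = ∑ j ∈ J, (ENNReal.ofReal (w j)) • Measure.dirac (x j))
    (hν1 : ν Set.univ = 1)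
    (G : ℝ) (hG : 0 < G)
    (hbound : ∀ E : Set (Fin 2 → ℝ), MeasurableSet E →
      G * Real.sqrt (ν E).toReal ≤ (μ E).toReal)
    (hnofix : ∀ p : Fin 2 → ℝ, 0 < ν {p} → (rotM m).mulVec p ≠ p) :
    Real.sqrt m * G ≤ (μ Set.univ).toReal := by
  classical
  set θ := 2 * Real.pi / m with hθ
  have hrot : rotM m = rotA θ := rfl
  set A : (Fin 2 → ℝ) → (Fin 2 → ℝ) := (rotA θ).mulVec with hA
  have hm0 : (0:ℝ) < m := by positivity
  -- ν of singletons
  have hνs : ∀ j ∈ J, ν {x j} = ENNReal.ofReal (w j) := by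
    intro j hj
    rw [hν, Measure.finset_sum_apply]
    rw [Finset.sum_eq_single j]
    · simp
    · intro j' hj' hne
      have : x j' ≠ x j := fun h => hne (hx hj' hj h)
      simp [Measure.dirac_apply', this]
    · intro h; exact absurd hj h
  -- invariance of ν on singletons
  have hνA : ∀ q : Fin 2 → ℝ, ν {A q} = ν {q} := by
    intro q
    conv_lhs => rw [← hνinv]
    rw [hrot, Measure.map_apply (rotA_meas θ) (measurableSet_singleton _)]
    congr 1
    ext y
    simp only [hA, Set.mem_preimage, Set.mem_singleton_iff, (rotA_inj θ).eq_iff]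
  have hνAk : ∀ (k : ℕ) (q : Fin 2 → ℝ), ν {A^[k] q} = ν {q} := by
    intro k
    induction k with
    | zero => simp
    | succ n ih =>
        intro q
        rw [Function.iterate_succ_apply', hνA, ih]
  -- the filtered set of atoms
  set P : Finset ι := J.filter (fun j => 0 < w j) with hP
  -- key: m * w j ≤ 1 for atoms
  have key : ∀ j ∈ P, (m:ℝ) * w j ≤ 1 := by
    intro j hj
    obtain ⟨hjJ, hwj⟩ := Finset.mem_filter.1 hj
    set p : Fin 2 → ℝ := x j with hp
    have hνp : ν {p} = ENNReal.ofReal (w j) := hνs j hjJ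
    have hνppos : 0 < ν {p} := by rw [hνp]; exact ENNReal.ofReal_pos.2 hwj
    have hApne : A p ≠ p := by
      have := hnofix p hνppos
      rwa [hrot] at this
    have hpne : p ≠ 0 := by
      intro h0
      apply hApne
      rw [h0]
      exact Matrix.mulVec_zero _
    -- distinct orbit points
    have hdis : ∀ i ∈ Finset.range m, ∀ k ∈ Finset.range m, i ≠ k →
        A^[i] p ≠ A^[k] p := by
      have main : ∀ i k : ℕ, i < k → k < m → A^[i] p ≠ A^[k] p := by
        intro i k hik hkm heq
        have hkeq : k = i + (k - i) := by omega
        have hinj : Function.Injective (A^[i]) := Function.Injective.iterate (rotA_inj θ) i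
        have h3 : A^[k-i] p = p := hinj (by
          rw [← Function.iterate_add_apply, ← hkeq]
          exact heq.symm)
        set d := k - i with hd
        have hd1 : 1 ≤ d := by omega
        have hdm : d < m := by omega
        rw [rotA_iterate] at h3
        have hcos := rotA_fixed h3 hpne
        have hθd : 0 < (d:ℝ) * θ := by
          apply mul_pos
          · exact_mod_cast hd1
          · rw [hθ]; positivity
        have hθd2 : (d:ℝ) * θ < 2 * Real.pi := by
          rw [hθ]
          rw [div_eq_mul_inv, ← mul_assoc]
          calc (d:ℝ) * (2 * Real.pi) * (m:ℝ)⁻¹ < (m:ℝ) * (2 * Real.pi) * (m:ℝ)⁻¹ := by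
                apply mul_lt_mul_of_pos_right
                · apply mul_lt_mul_of_pos_right
                  · exact_mod_cast hdm
                  · positivity
                · positivity
            _ = 2 * Real.pi := by field_simp
        have := (Real.cos_eq_one_iff_of_lt_of_lt (by linarith) hθd2).1 hcos
        linarith
      intro i hi k hk hne
      rcases lt_or_gt_of_ne hne with h | h
      · exact main i k h (Finset.mem_range.1 hk)
      · exact fun heq => main k i h (Finset.mem_range.1 hi) heq.symm
    have horbit : ν (⋃ i ∈ Finset.range m, {A^[i] p}) = (m : ENNReal) * ENNReal.ofReal (w j) := by
      rw [measure_biUnion_finset]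
      · have : ∀ i ∈ Finset.range m, ν {A^[i] p} = ENNReal.ofReal (w j) := by
          intro i _
          rw [hνAk, hνp]
        rw [Finset.sum_congr rfl this, Finset.sum_const, Finset.card_range, nsmul_eq_mul]
      · intro i hi k hk hik
        simp only [Set.disjoint_singleton_left, Set.mem_singleton_iff]
        exact hdis i hi k hk hik
      · intro i _
        exact measurableSet_singleton _
    have hle : (m : ENNReal) * ENNReal.ofReal (w j) ≤ 1 := by
      rw [← horbit, ← hν1]
      exact measure_mono (Set.subset_univ _)
    have : ENNReal.ofReal ((m:ℝ) * w j) ≤ ENNReal.ofReal 1 := by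
      rw [ENNReal.ofReal_mul (le_of_lt hm0), ENNReal.ofReal_natCast, ENNReal.ofReal_one]
      exact hle
    exact (ENNReal.ofReal_le_ofReal_iff (by norm_num)).1 this
  -- sum of weights over J is 1
  have hsumJ : ∑ j ∈ J, w j = 1 := by
    have h1 : ν Set.univ = ∑ j ∈ J, ENNReal.ofReal (w j) := by
      rw [hν, Measure.finset_sum_apply]
      simp
    rw [hν1] at h1
    have h2 : ∑ j ∈ J, ENNReal.ofReal (w j) = ENNReal.ofReal (∑ j ∈ J, w j) :=
      (ENNReal.ofReal_sum_of_nonneg hw).symm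
    rw [h2] at h1
    have := congrArg ENNReal.toReal h1
    rw [ENNReal.toReal_ofReal (Finset.sum_nonneg hw), ENNReal.toReal_one] at this
    exact this.symm
  have hsumP : ∑ j ∈ P, w j = 1 := by
    rw [← hsumJ]
    apply Finset.sum_subset (Finset.filter_subset _ _)
    intro j hj hnj
    have hwge := hw j hj
    have h0 : ¬ 0 < w j := fun h => hnj (Finset.mem_filter.2 ⟨hj, h⟩)
    linarith [not_lt.1 h0]
  -- μ of union of singletons ≤ μ univ
  have hμsum : ∑ j ∈ P, (μ {x j}).toReal ≤ (μ Set.univ).toReal := by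
    have h1 : ∑ j ∈ P, μ {x j} = μ (⋃ j ∈ P, {x j}) := by
      rw [measure_biUnion_finset]
      · intro i hi k hk hik
        simp only [Set.disjoint_singleton_left, Set.mem_singleton_iff]
        exact fun h => hik (hx (Finset.filter_subset _ _ hi) (Finset.filter_subset _ _ hk) h)
      · intro i _
        exact measurableSet_singleton _
    have h2 : μ (⋃ j ∈ P, {x j}) ≤ μ Set.univ := measure_mono (Set.subset_univ _)
    calc ∑ j ∈ P, (μ {x j}).toReal
        = (∑ j ∈ P, μ {x j}).toReal := (ENNReal.toReal_sum fun j _ => measure_ne_top μ _).symm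
      _ ≤ (μ Set.univ).toReal := by
          rw [h1]
          exact ENNReal.toReal_mono (measure_ne_top μ _) h2
  -- final chain
  have step : ∀ j ∈ P, G * (Real.sqrt m * w j) ≤ (μ {x j}).toReal := by
    intro j hj
    obtain ⟨hjJ, hwj⟩ := Finset.mem_filter.1 hj
    have hsq : Real.sqrt m * w j ≤ Real.sqrt (w j) := by
      rw [show Real.sqrt m * w j = Real.sqrt m * w j from rfl]
      have h1 : (Real.sqrt m * w j)^2 ≤ w j := by
        have hs : Real.sqrt m ^ 2 = (m:ℝ) := Real.sq_sqrt (le_of_lt hm0)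
        have e : (Real.sqrt m * w j)^2 = ((m:ℝ) * w j) * w j := by rw [mul_pow, hs]; ring
        rw [e]
        calc ((m:ℝ) * w j) * w j ≤ 1 * w j := mul_le_mul_of_nonneg_right (key j hj) hwj.le
          _ = w j := one_mul _
      calc Real.sqrt m * w j = Real.sqrt ((Real.sqrt m * w j)^2) := by
            rw [Real.sqrt_sq (by positivity)]
        _ ≤ Real.sqrt (w j) := Real.sqrt_le_sqrt h1
    calc G * (Real.sqrt m * w j) ≤ G * Real.sqrt (w j) := by
          exact mul_le_mul_of_nonneg_left hsq hG.le
      _ = G * Real.sqrt (ν {x j}).toReal := by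
          rw [hνs j hjJ, ENNReal.toReal_ofReal hwj.le]
      _ ≤ (μ {x j}).toReal := hbound _ (measurableSet_singleton _)
  calc Real.sqrt m * G = ∑ j ∈ P, G * (Real.sqrt m * w j) := by
        rw [← Finset.mul_sum]
        rw [show ∑ j ∈ P, Real.sqrt m * w j = Real.sqrt m * ∑ j ∈ P, w j from
          (Finset.mul_sum _ _ _).symm]
        rw [hsumP, mul_one]
        ring
    _ ≤ ∑ j ∈ P, (μ {x j}).toReal := Finset.sum_le_sum step
    _ ≤ (μ Set.univ).toReal := hμsum
end

section
/- Let μ, ν be finite nonnegative Borel measures on ℝ² with G√(ν(E)) ≤ μ(E) for every Borel E, with G > 0, and let h(x) = lim_{r→0} ν(B(x,r))/μ(B(x,r)) be the Radon–Nikodym derivative of ν with respect to μ (defined μ-a.e.). Then h(x) = 0 for μ-a.e. x outside the atom set D = {x : μ({x}) > 0}. -/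
open MeasureTheory Filter

theorem density_zero_off_atoms (μ ν : Measure (Fin 2 → ℝ))
    [IsFiniteMeasure μ] [IsFiniteMeasure ν] (G : ℝ) (hG : 0 < G)
    (hbound : ∀ E : Set (Fin 2 → ℝ), MeasurableSet E →
      G * Real.sqrt (ν E).toReal ≤ (μ E).toReal)
    (h : (Fin 2 → ℝ) → ℝ)
    (hh : ∀ᵐ p ∂μ, Tendsto (fun r : ℝ =>
      (ν (Metric.ball p r)).toReal / (μ (Metric.ball p r)).toReal)
      (nhdsWithin 0 (Set.Ioi 0)) (nhds (h p))) :
    ∀ᵐ p ∂μ, μ {p} = 0 → h p = 0 := by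
  filter_upwards [hh] with p hp hatom
  -- μ(ball p r) → 0 as r → 0+
  have hcl : Tendsto (fun r : ℝ => μ (Metric.cthickening r {p})) (nhds 0) (nhds (μ {p})) :=
    tendsto_measure_cthickening_of_isClosed
      ⟨1, one_pos, measure_ne_top μ _⟩ isClosed_singleton
  rw [hatom] at hcl
  have hball : Tendsto (fun r : ℝ => μ (Metric.ball p r))
      (nhdsWithin 0 (Set.Ioi 0)) (nhds 0) := by
    apply tendsto_of_tendsto_of_tendsto_of_le_of_le
      (tendsto_const_nhds (x := (0 : ENNReal))) (hcl.mono_left nhdsWithin_le_nhds)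
    · intro r; exact zero_le
    · intro r
      exact measure_mono (Metric.ball_subset_closedBall.trans
        (Metric.closedBall_subset_cthickening_singleton p r))
  have hballR : Tendsto (fun r : ℝ => (μ (Metric.ball p r)).toReal)
      (nhdsWithin 0 (Set.Ioi 0)) (nhds 0) := by
    have := (ENNReal.tendsto_toReal (by simp)).comp hball
    exact this
  -- quotient bound
  have hquot : ∀ r : ℝ,
      (ν (Metric.ball p r)).toReal / (μ (Metric.ball p r)).toReal
        ≤ (μ (Metric.ball p r)).toReal / G ^ 2 := by
    intro r
    set a := (ν (Metric.ball p r)).toReal with ha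
    set b := (μ (Metric.ball p r)).toReal with hb
    have ha0 : 0 ≤ a := ENNReal.toReal_nonneg
    have hb0 : 0 ≤ b := ENNReal.toReal_nonneg
    have hab : G * Real.sqrt a ≤ b := hbound _ Metric.isOpen_ball.measurableSet
    rcases eq_or_lt_of_le hb0 with hb' | hb'
    · have h1 : Real.sqrt a ≤ 0 := by nlinarith
      have h2 : Real.sqrt a = 0 := le_antisymm h1 (Real.sqrt_nonneg a)
      have h3 : a = 0 := by
        have := Real.sq_sqrt ha0
        rw [h2] at this; simpa using this.symm
      simp [h3, ← hb']
    · rw [div_le_div_iff₀ hb' (by positivity)]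
      have hsq : (G * Real.sqrt a) ^ 2 ≤ b ^ 2 := by
        apply pow_le_pow_left₀ (by positivity) hab
      have : G ^ 2 * a ≤ b ^ 2 := by
        have hs : Real.sqrt a ^ 2 = a := Real.sq_sqrt ha0
        nlinarith
      nlinarith
  have hquot0 : Tendsto (fun r : ℝ =>
      (ν (Metric.ball p r)).toReal / (μ (Metric.ball p r)).toReal)
      (nhdsWithin 0 (Set.Ioi 0)) (nhds 0) := by
    apply squeeze_zero (fun r => by positivity) hquot
    simpa using hballR.div_const (G ^ 2)
  exact tendsto_nhds_unique hp hquot0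
end
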